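/- Consider random processes where X^*_{t+1} = f^*ₜ(X^*ₜ, 𝐔ₜ, N⁰ₜ) and, for i = 1,…,n, Xⁱ_{t+1} = fⁱₜ(Xⁱₜ, X^*ₜ, 𝐔ₜ, Nⁱₜ), with {N⁰ₜ}, …, {Nⁿₜ} mutually independent i.i.d. noise processes independent of the initial state, and suppose each controller's action satisfies Uⁱₜ = gⁱₜ(Xⁱₜ, X^*_{1:t}, 𝐔_{1:t-1}) and the initial local states X¹₁, …, Xⁿ₁ are mutually independent given X^*₁. Then for every t, the local states X¹ₜ, …, Xⁿₜ are conditionally independent given (X^*_{1:t}, 𝐔_{1:t-1}): P(X¹ₜ = x¹, …, Xⁿₜ = xⁿ | X^*_{1:t}, 𝐔_{1:t-1}) = ∏ᵢ P(Xⁱₜ = xⁱ | X^*_{1:t}, 𝐔_{1:t-1}). -/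

import Mathlib

/-!
Fix an outcome ω₀ realising the observed history (X*_{0:t}, U_{0:t-1}). Along it the global
state and all actions are known constants, so the history event is a condition on the initial
state and the noise alone: X*₀ has its observed value, the global noise N⁰ steers X* along the
observed path, and for each i the local trajectory generated by (Xⁱ₀, Nⁱ) produces the observed
actions Uⁱ. On that event Xⁱₜ is a function of (Xⁱ₀, Nⁱ_{0:t-1}) as well. Given X*₀ the pairs
(Xⁱ₀, Nⁱ) and N⁰ are independent, so every such event has product probability, and the common
factors cancel in the conditional probabilities.
-/

open Finset

open Classical in
/-- Probability of an event under a pmf on a finite sample space. -/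
noncomputable def prOf {Ω : Type} [Fintype Ω] (p : Ω → ℝ) (A : Ω → Prop) : ℝ :=
  ∑ ω, if A ω then p ω else 0

theorem mul_prod_div_mul_prod_eq_prod {ι K : Type*} [Fintype ι] [DecidableEq ι] [Field K]
    (c : K) (a g : ι → K) (h : c * ∏ i, g i ≠ 0) :
    c * (∏ i, a i) / (c * ∏ i, g i) =
      ∏ i, c * (a i * ∏ j ∈ univ.erase i, g j) / (c * ∏ i, g i) := by
  obtain ⟨hc, hg⟩ := mul_ne_zero_iff.mp h
  rw [mul_div_mul_left _ _ hc, ← Finset.prod_div_distrib]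
  refine Finset.prod_congr rfl fun i _ => ?_
  rw [← Finset.mul_prod_erase _ g (Finset.mem_univ i)] at hg ⊢
  rw [mul_div_mul_left _ _ hc, mul_div_mul_right _ _ (right_ne_zero_of_mul hg)]

section Probability

variable {Ω : Type} [Fintype Ω] {p : Ω → ℝ}

theorem prOf_congr {A B : Ω → Prop} (h : ∀ ω, A ω ↔ B ω) : prOf p A = prOf p B := by
  rw [show A = B from funext fun ω => propext (h ω)]

theorem prOf_mono (hp : ∀ ω, 0 ≤ p ω) {A B : Ω → Prop} (h : ∀ ω, A ω → B ω) :
    prOf p A ≤ prOf p B := by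
  classical
  refine Finset.sum_le_sum fun ω _ => ?_
  split_ifs with hA hB <;> first | exact le_rfl | exact hp ω | exact absurd (h ω hA) hB

theorem exists_of_prOf_ne_zero {A : Ω → Prop} (h : prOf p A ≠ 0) : ∃ ω, A ω := by
  classical
  obtain ⟨ω, -, hω⟩ := Finset.exists_ne_zero_of_sum_ne_zero h
  exact ⟨ω, by_contra fun hA => hω (if_neg hA)⟩

theorem prOf_eq_sum_prOf_and_eq {α : Type} [Fintype α] (A : Ω → Prop) (V : Ω → α) :
    prOf p A = ∑ a, prOf p (fun ω => A ω ∧ V ω = a) := by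
  classical
  simp only [prOf]
  rw [Finset.sum_comm]
  refine Finset.sum_congr rfl fun ω _ => ?_
  by_cases hA : A ω <;> simp [hA]

open Classical in
theorem prOf_and_forall_eq_mul_prod {α ι : Type} [Fintype α] [Fintype ι] {β : ι → Type}
    [∀ i, Fintype (β i)] (E : Ω → Prop) (V₀ : Ω → α) (V : ∀ i, Ω → β i) (c : α → ℝ)
    (r : ∀ i, β i → ℝ)
    (hjoint : ∀ a (b : ∀ i, β i),
      prOf p (fun ω => E ω ∧ V₀ ω = a ∧ ∀ i, V i ω = b i) = c a * ∏ i, r i (b i))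
    (A₀ : α → Prop) (A : ∀ i, β i → Prop) :
    prOf p (fun ω => E ω ∧ A₀ (V₀ ω) ∧ ∀ i, A i (V i ω)) =
      (∑ a, if A₀ a then c a else 0) * ∏ i, ∑ b, if A i b then r i b else 0 := by
  rw [prOf_eq_sum_prOf_and_eq _ (fun ω => (V₀ ω, fun i => V i ω)), Fintype.sum_prod_type,
    Fintype.prod_sum, Finset.sum_mul_sum]
  refine Finset.sum_congr rfl fun a _ => Finset.sum_congr rfl fun b _ => ?_
  rw [Finset.prod_ite_zero, ite_zero_mul_ite_zero]
  split_ifs with hab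
  · rw [← hjoint]
    refine prOf_congr fun ω => ?_
    simp only [Prod.ext_iff, funext_iff]
    constructor
    · rintro ⟨⟨hE, -, -⟩, hV₀, hV⟩
      exact ⟨hE, hV₀, hV⟩
    · rintro ⟨hE, rfl, hV⟩
      exact ⟨⟨hE, hab.1, fun i => hV i ▸ hab.2 i (Finset.mem_univ i)⟩, rfl, hV⟩
  · rw [prOf_congr (B := fun _ => False), prOf]
    · simp
    · refine fun ω => iff_false_intro ?_
      rintro ⟨⟨-, hA₀, hA⟩, hV⟩
      simp only [Prod.ext_iff, funext_iff] at hV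
      exact hab ⟨hV.1 ▸ hA₀, fun i _ => hV.2 i ▸ hA i⟩

theorem exists_prOf_initial_noise_eq_mul_prod {ι S W₀ : Type} [Fintype ι] {X W : ι → Type}
    (Xs₀ : Ω → S) (Xl₀ : ∀ i, Ω → X i) (N0 : ℕ → Ω → W₀) (N : ∀ i, ℕ → Ω → W i) (T : ℕ) (s₀ : S)
    (hindep : ∀ (x : ∀ i, X i) (n0 : Fin T → W₀) (nv : ∀ i, Fin T → W i),
      prOf p (fun ω => Xs₀ ω = s₀ ∧ (∀ i, Xl₀ i ω = x i) ∧
          (∀ τ : Fin T, N0 τ.1 ω = n0 τ) ∧ ∀ i, ∀ τ : Fin T, N i τ.1 ω = nv i τ) =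
        prOf p (fun ω => Xs₀ ω = s₀ ∧ ∀ i, Xl₀ i ω = x i) *
          (∏ τ : Fin T, prOf p (fun ω => N0 τ.1 ω = n0 τ)) *
          ∏ i, ∏ τ : Fin T, prOf p (fun ω => N i τ.1 ω = nv i τ))
    (hs₀ : prOf p (fun ω => Xs₀ ω = s₀) ≠ 0)
    (hinit : ∀ x : ∀ i, X i,
      prOf p (fun ω => (∀ i, Xl₀ i ω = x i) ∧ Xs₀ ω = s₀) / prOf p (fun ω => Xs₀ ω = s₀) =
        ∏ i, prOf p (fun ω => Xl₀ i ω = x i ∧ Xs₀ ω = s₀) / prOf p (fun ω => Xs₀ ω = s₀)) :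
    ∃ (c : (Fin T → W₀) → ℝ) (r : ∀ i, X i × (Fin T → W i) → ℝ),
      ∀ n0 (b : ∀ i, X i × (Fin T → W i)),
      prOf p (fun ω => Xs₀ ω = s₀ ∧ (fun τ : Fin T => N0 τ ω) = n0 ∧
        ∀ i, (Xl₀ i ω, fun τ : Fin T => N i τ ω) = b i) = c n0 * ∏ i, r i (b i) := by
  set q := prOf p (fun ω => Xs₀ ω = s₀)
  refine ⟨fun n0 => q * ∏ τ : Fin T, prOf p (fun ω => N0 τ ω = n0 τ),
    fun i b => prOf p (fun ω => Xl₀ i ω = b.1 ∧ Xs₀ ω = s₀) / q *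
      ∏ τ : Fin T, prOf p (fun ω => N i τ ω = b.2 τ), fun n0 b => ?_⟩
  have hjoint := (div_eq_iff hs₀).mp (hinit fun i => (b i).1)
  rw [prOf_congr fun ω => and_comm] at hjoint
  calc _ = prOf p (fun ω => Xs₀ ω = s₀ ∧ (∀ i, Xl₀ i ω = (b i).1) ∧
          (∀ τ : Fin T, N0 τ.1 ω = n0 τ) ∧ ∀ i, ∀ τ : Fin T, N i τ.1 ω = (b i).2 τ) :=
        prOf_congr fun ω => by simp only [funext_iff, Prod.ext_iff, forall_and]; tauto
    _ = _ := by rw [hindep, hjoint, Finset.prod_mul_distrib]; ring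

open Classical in
theorem prOf_cond_eq_prod_of_factorization {α ι : Type} [Fintype α] [Fintype ι] [DecidableEq ι]
    {β γ : ι → Type} [∀ i, Fintype (β i)] (E : Ω → Prop) (V₀ : Ω → α) (V : ∀ i, Ω → β i)
    (c : α → ℝ) (r : ∀ i, β i → ℝ)
    (hjoint : ∀ a (b : ∀ i, β i),
      prOf p (fun ω => E ω ∧ V₀ ω = a ∧ ∀ i, V i ω = b i) = c a * ∏ i, r i (b i))
    (H : Ω → Prop) (A₀ : α → Prop) (G : ∀ i, β i → Prop)
    (hH : ∀ ω, H ω ↔ E ω ∧ A₀ (V₀ ω) ∧ ∀ i, G i (V i ω))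
    (Y : ∀ i, Ω → γ i) (F : ∀ i, β i → γ i) (hY : ∀ ω, H ω → ∀ i, Y i ω = F i (V i ω))
    (hH₀ : prOf p H ≠ 0) (x : ∀ i, γ i) :
    prOf p (fun ω => (∀ i, Y i ω = x i) ∧ H ω) / prOf p H =
      ∏ i, prOf p (fun ω => Y i ω = x i ∧ H ω) / prOf p H := by
  set κ := ∑ a, if A₀ a then c a else 0
  set μ : ∀ i, (β i → Prop) → ℝ := fun i B => ∑ b, if B b then r i b else 0
  have hS : ∀ S : ∀ i, γ i → Prop, prOf p (fun ω => (∀ i, S i (Y i ω)) ∧ H ω) =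
      κ * ∏ i, μ i (fun b => G i b ∧ S i (F i b)) := by
    refine fun S => (prOf_congr fun ω => ?_).trans
      (prOf_and_forall_eq_mul_prod E V₀ V c r hjoint _ _)
    constructor
    · rintro ⟨hS, hω⟩
      obtain ⟨hE, hA₀, hG⟩ := (hH ω).1 hω
      exact ⟨hE, hA₀, fun i => ⟨hG i, hY ω hω i ▸ hS i⟩⟩
    · rintro ⟨hE, hA₀, hGS⟩
      have hω := (hH ω).2 ⟨hE, hA₀, fun i => (hGS i).1⟩
      exact ⟨fun i => hY ω hω i ▸ (hGS i).2, hω⟩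
  have hall := hS fun i y => y = x i
  have hnone : prOf p H = κ * ∏ i, μ i (G i) := by
    have h := hS fun _ _ => True
    simp only [implies_true, true_and, and_true] at h
    exact h
  have hone : ∀ i, prOf p (fun ω => Y i ω = x i ∧ H ω) =
      κ * (μ i (fun b => G i b ∧ F i b = x i) * ∏ j ∈ univ.erase i, μ j (G j)) := by
    intro i
    calc prOf p (fun ω => Y i ω = x i ∧ H ω)
        _ = prOf p (fun ω => (∀ j, j = i → Y j ω = x j) ∧ H ω) :=
          prOf_congr fun ω => by rw [forall_eq]
        _ = κ * ∏ j, μ j (fun b => G j b ∧ (j = i → F j b = x j)) := hS fun j y => j = i → y = x j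
        _ = _ := by
          rw [← Finset.mul_prod_erase _ _ (Finset.mem_univ i)]
          simp only [forall_const]
          congr 2
          refine Finset.prod_congr rfl fun j hj => ?_
          simp only [Finset.ne_of_mem_erase hj, false_imp_iff, and_true]
  rw [hall, hnone, mul_prod_div_mul_prod_eq_prod _ _ _ (hnone ▸ hH₀)]
  exact Finset.prod_congr rfl fun i _ => by rw [hone]

end Probability

def trajectory {X I : Type*} (f : ℕ → X → I → X) (x₀ : X) (v : ℕ → I) : ℕ → X
  | 0 => x₀
  | τ + 1 => f τ (trajectory f x₀ v τ) (v τ)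

section Trajectory

variable {X I : Type*} (f : ℕ → X → I → X) (x₀ : X)

theorem trajectory_congr {v v' : ℕ → I} {τ : ℕ} (h : ∀ σ < τ, v σ = v' σ) :
    trajectory f x₀ v τ = trajectory f x₀ v' τ := by
  induction τ with
  | zero => rfl
  | succ τ ih => rw [trajectory, trajectory, ih fun σ hσ => h σ (by omega), h τ (by omega)]

theorem eq_trajectory {x : ℕ → X} {v : ℕ → I} {τ : ℕ} (h₀ : x 0 = x₀)
    (hstep : ∀ σ < τ, x (σ + 1) = f σ (x σ) (v σ)) : x τ = trajectory f x₀ v τ := by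
  induction τ with
  | zero => exact h₀
  | succ τ ih => rw [hstep τ (by omega), ih fun σ hσ => hstep σ (by omega), trajectory]

theorem trajectory_extend_val {t τ : ℕ} (hτ : τ ≤ t) (v v' : ℕ → I) :
    trajectory f x₀ (Function.extend Fin.val (fun σ : Fin t => v σ) v') τ =
      trajectory f x₀ v τ :=
  trajectory_congr f x₀ fun σ hσ =>
    Fin.val_injective.extend_apply (fun σ : Fin t => v σ) v' ⟨σ, by omega⟩

end Trajectory

section CoupledSubsystems

variable {Ω ι S W₀ : Type*} {X A W : ι → Type*}
  {Xs : ℕ → Ω → S} {Xl : ∀ i, ℕ → Ω → X i} {U : ∀ i, ℕ → Ω → A i}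
  {N0 : ℕ → Ω → W₀} {N : ∀ i, ℕ → Ω → W i}
  {fs : ℕ → S → (∀ i, A i) → W₀ → S} {fl : ∀ i, ℕ → X i → S → (∀ i, A i) → W i → X i}
  {g : ∀ i, (t : ℕ) → X i → (Fin (t + 1) → S) → (Fin t → ∀ j, A j) → A i}
  {ω ω₀ : Ω}

def SameHistory (Xs : ℕ → Ω → S) (U : ∀ i, ℕ → Ω → A i) (t : ℕ) (ω ω₀ : Ω) : Prop :=
  (∀ τ < t + 1, Xs τ ω = Xs τ ω₀) ∧ ∀ τ < t, ∀ j, U j τ ω = U j τ ω₀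

def localTrajectory (fl : ∀ i, ℕ → X i → S → (∀ i, A i) → W i → X i) (Xs : ℕ → Ω → S)
    (U : ∀ i, ℕ → Ω → A i) (ω₀ : Ω) (i : ι) : X i → (ℕ → W i) → ℕ → X i :=
  trajectory fun τ x w => fl i τ x (Xs τ ω₀) (fun j => U j τ ω₀) w

theorem eq_localTrajectory_of_sameHistory
    (hXl : ∀ i t ω, Xl i (t + 1) ω = fl i t (Xl i t ω) (Xs t ω) (fun j => U j t ω) (N i t ω))
    {t : ℕ} (h : SameHistory Xs U t ω ω₀) (i : ι) :
    Xl i t ω = localTrajectory fl Xs U ω₀ i (Xl i 0 ω) (fun τ => N i τ ω) t :=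
  eq_trajectory (x := fun τ => Xl i τ ω) _ _ rfl fun σ hσ => by
    rw [hXl, h.1 σ (by omega), funext fun j => h.2 σ hσ j]

theorem sameHistory_succ_iff
    (hXs : ∀ t ω, Xs (t + 1) ω = fs t (Xs t ω) (fun i => U i t ω) (N0 t ω))
    (hXl : ∀ i t ω, Xl i (t + 1) ω = fl i t (Xl i t ω) (Xs t ω) (fun j => U j t ω) (N i t ω))
    (hU : ∀ i t ω, U i t ω = g i t (Xl i t ω) (fun τ : Fin (t + 1) => Xs τ.1 ω)
      (fun τ : Fin t => fun j => U j τ.1 ω)) (s : ℕ) :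
    SameHistory Xs U (s + 1) ω ω₀ ↔ SameHistory Xs U s ω ω₀ ∧
      fs s (Xs s ω₀) (fun j => U j s ω₀) (N0 s ω) = Xs (s + 1) ω₀ ∧
      ∀ i, g i s (localTrajectory fl Xs U ω₀ i (Xl i 0 ω) (fun τ => N i τ ω) s)
        (fun τ : Fin (s + 1) => Xs τ.1 ω₀) (fun τ : Fin s => fun j => U j τ.1 ω₀) = U i s ω₀ := by
  have hsplit : SameHistory Xs U (s + 1) ω ω₀ ↔ SameHistory Xs U s ω ω₀ ∧
      Xs (s + 1) ω = Xs (s + 1) ω₀ ∧ ∀ j, U j s ω = U j s ω₀ := by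
    simp only [SameHistory, Nat.forall_lt_succ_right]
    tauto
  rw [hsplit]
  refine and_congr_right fun h => ?_
  have hUs : ∀ j, U j s ω = g j s (localTrajectory fl Xs U ω₀ j (Xl j 0 ω) (fun τ => N j τ ω) s)
      (fun τ : Fin (s + 1) => Xs τ.1 ω₀) (fun τ : Fin s => fun k => U k τ.1 ω₀) := by
    intro j
    have hxs : (fun τ : Fin (s + 1) => Xs τ.1 ω) = fun τ => Xs τ.1 ω₀ :=
      funext fun τ => h.1 τ τ.2
    have hus : (fun τ : Fin s => fun k => U k τ.1 ω) = fun τ k => U k τ.1 ω₀ :=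
      funext fun τ => funext fun k => h.2 τ τ.2 k
    rw [hU, eq_localTrajectory_of_sameHistory hXl h, hxs, hus]
  rw [hXs, h.1 s s.lt_succ_self]
  constructor
  · rintro ⟨hx, hu⟩
    exact ⟨by simpa only [hu] using hx, fun i => (hUs i).symm.trans (hu i)⟩
  · rintro ⟨hx, hg⟩
    have hu : ∀ j, U j s ω = U j s ω₀ := fun j => (hUs j).trans (hg j)
    exact ⟨by simpa only [hu] using hx, hu⟩

theorem sameHistory_iff
    (hXs : ∀ t ω, Xs (t + 1) ω = fs t (Xs t ω) (fun i => U i t ω) (N0 t ω))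
    (hXl : ∀ i t ω, Xl i (t + 1) ω = fl i t (Xl i t ω) (Xs t ω) (fun j => U j t ω) (N i t ω))
    (hU : ∀ i t ω, U i t ω = g i t (Xl i t ω) (fun τ : Fin (t + 1) => Xs τ.1 ω)
      (fun τ : Fin t => fun j => U j τ.1 ω)) (t : ℕ) :
    SameHistory Xs U t ω ω₀ ↔ Xs 0 ω = Xs 0 ω₀ ∧
      (∀ τ < t, fs τ (Xs τ ω₀) (fun j => U j τ ω₀) (N0 τ ω) = Xs (τ + 1) ω₀) ∧
      ∀ i, ∀ τ < t, g i τ (localTrajectory fl Xs U ω₀ i (Xl i 0 ω) (fun σ => N i σ ω) τ)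
        (fun σ : Fin (τ + 1) => Xs σ.1 ω₀) (fun σ : Fin τ => fun j => U j σ.1 ω₀) = U i τ ω₀ := by
  induction t with
  | zero => simp [SameHistory]
  | succ s ih =>
    rw [sameHistory_succ_iff hXs hXl hU, ih]
    simp only [Nat.forall_lt_succ_right, forall_and]
    tauto

theorem history_iff_sameHistory {t : ℕ} {xsv : Fin (t + 1) → S} {uv : Fin t → ∀ j, A j}
    (h₀ : (∀ τ : Fin (t + 1), Xs τ.1 ω₀ = xsv τ) ∧ ∀ τ : Fin t, ∀ j, U j τ.1 ω₀ = uv τ j) :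
    ((∀ τ : Fin (t + 1), Xs τ.1 ω = xsv τ) ∧ ∀ τ : Fin t, ∀ j, U j τ.1 ω = uv τ j) ↔
      SameHistory Xs U t ω ω₀ := by
  simp only [← h₀.1, ← h₀.2, SameHistory, Fin.forall_iff]

end CoupledSubsystems

theorem coupled_subsystems_conditional_independence_general
    (Ω : Type) [Fintype Ω] (n : ℕ)
    (𝒳s 𝒩0 : Type) (𝒳 𝒰 𝒩 : Fin n → Type)
    [∀ i, Fintype (𝒳 i)]
    [Fintype 𝒩0] [∀ i, Fintype (𝒩 i)]
    (p : Ω → ℝ) (hp : ∀ ω, 0 ≤ p ω)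
    (Xs : ℕ → Ω → 𝒳s) (Xl : (i : Fin n) → ℕ → Ω → 𝒳 i)
    (U : (i : Fin n) → ℕ → Ω → 𝒰 i)
    (N0 : ℕ → Ω → 𝒩0) (N : (i : Fin n) → ℕ → Ω → 𝒩 i)
    (fs : ℕ → 𝒳s → (∀ i, 𝒰 i) → 𝒩0 → 𝒳s)
    (fl : (i : Fin n) → ℕ → 𝒳 i → 𝒳s → (∀ i, 𝒰 i) → 𝒩 i → 𝒳 i)
    (g : (i : Fin n) → (t : ℕ) → 𝒳 i → (Fin (t + 1) → 𝒳s) →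
      (Fin t → ∀ j, 𝒰 j) → 𝒰 i)
    (hXs : ∀ t ω, Xs (t + 1) ω = fs t (Xs t ω) (fun i => U i t ω) (N0 t ω))
    (hXl : ∀ i t ω, Xl i (t + 1) ω =
      fl i t (Xl i t ω) (Xs t ω) (fun j => U j t ω) (N i t ω))
    (hU : ∀ i t ω, U i t ω = g i t (Xl i t ω) (fun τ : Fin (t + 1) => Xs τ.1 ω)
      (fun τ : Fin t => fun j => U j τ.1 ω))
    (hindep : ∀ (T' : ℕ) (xs : 𝒳s) (x : ∀ i, 𝒳 i)
        (n0 : Fin T' → 𝒩0) (nv : ∀ i, Fin T' → 𝒩 i),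
      prOf p (fun ω => Xs 0 ω = xs ∧ (∀ i, Xl i 0 ω = x i) ∧
          (∀ τ : Fin T', N0 τ.1 ω = n0 τ) ∧ ∀ i, ∀ τ : Fin T', N i τ.1 ω = nv i τ) =
        prOf p (fun ω => Xs 0 ω = xs ∧ ∀ i, Xl i 0 ω = x i) *
          (∏ τ : Fin T', prOf p (fun ω => N0 τ.1 ω = n0 τ)) *
          ∏ i, ∏ τ : Fin T', prOf p (fun ω => N i τ.1 ω = nv i τ))
    (hinit : ∀ xs : 𝒳s, 0 < prOf p (fun ω => Xs 0 ω = xs) →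
      ∀ x : ∀ i, 𝒳 i,
        prOf p (fun ω => (∀ i, Xl i 0 ω = x i) ∧ Xs 0 ω = xs) /
            prOf p (fun ω => Xs 0 ω = xs) =
          ∏ i, prOf p (fun ω => Xl i 0 ω = x i ∧ Xs 0 ω = xs) /
            prOf p (fun ω => Xs 0 ω = xs)) :
    ∀ (t : ℕ) (xsv : Fin (t + 1) → 𝒳s) (uv : Fin t → ∀ j, 𝒰 j),
      0 < prOf p (fun ω => (∀ τ : Fin (t + 1), Xs τ.1 ω = xsv τ) ∧
          ∀ τ : Fin t, ∀ j, U j τ.1 ω = uv τ j) →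
      ∀ x : ∀ i, 𝒳 i,
        prOf p (fun ω => (∀ i, Xl i t ω = x i) ∧
            (∀ τ : Fin (t + 1), Xs τ.1 ω = xsv τ) ∧
            ∀ τ : Fin t, ∀ j, U j τ.1 ω = uv τ j) /
          prOf p (fun ω => (∀ τ : Fin (t + 1), Xs τ.1 ω = xsv τ) ∧
            ∀ τ : Fin t, ∀ j, U j τ.1 ω = uv τ j) =
        ∏ i, prOf p (fun ω => Xl i t ω = x i ∧
            (∀ τ : Fin (t + 1), Xs τ.1 ω = xsv τ) ∧
            ∀ τ : Fin t, ∀ j, U j τ.1 ω = uv τ j) /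
          prOf p (fun ω => (∀ τ : Fin (t + 1), Xs τ.1 ω = xsv τ) ∧
            ∀ τ : Fin t, ∀ j, U j τ.1 ω = uv τ j) := by
  intro t xsv uv hpos x
  obtain ⟨ω₀, hω₀⟩ := exists_of_prOf_ne_zero hpos.ne'
  have hs₀ : 0 < prOf p (fun ω => Xs 0 ω = Xs 0 ω₀) :=
    hpos.trans_le <| prOf_mono hp fun ω h => ((history_iff_sameHistory hω₀).1 h).1 0 t.succ_pos
  -- Noise after time `t` never matters; that of ω₀ fills it in.
  let path : ∀ i, 𝒳 i × (Fin t → 𝒩 i) → ℕ → 𝒳 i := fun i b =>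
    localTrajectory fl Xs U ω₀ i b.1 (Function.extend Fin.val b.2 fun σ => N i σ ω₀)
  have hpath : ∀ ω i τ, τ ≤ t → path i (Xl i 0 ω, fun σ : Fin t => N i σ ω) τ =
      localTrajectory fl Xs U ω₀ i (Xl i 0 ω) (fun σ => N i σ ω) τ :=
    fun ω i τ hτ => trajectory_extend_val _ _ hτ (fun σ => N i σ ω) _
  obtain ⟨c, r, hjoint⟩ := exists_prOf_initial_noise_eq_mul_prod (Xs 0) (fun i => Xl i 0) N0 N t
    _ (hindep t _) hs₀.ne' (hinit _ hs₀)
  refine prOf_cond_eq_prod_of_factorization (fun ω => Xs 0 ω = Xs 0 ω₀)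
    (fun ω (σ : Fin t) => N0 σ ω)
    (fun i ω => (Xl i 0 ω, fun σ : Fin t => N i σ ω)) c r hjoint _
    (fun n0 => ∀ τ : Fin t, fs τ (Xs τ ω₀) (fun j => U j τ ω₀) (n0 τ) = Xs (τ + 1) ω₀)
    (fun i b => ∀ τ : Fin t, g i τ (path i b τ) (fun σ : Fin (τ + 1) => Xs σ.1 ω₀)
      (fun σ : Fin τ => fun j => U j σ.1 ω₀) = U i τ ω₀)
    (fun ω => ?_) (fun i => Xl i t) (fun i b => path i b t) (fun ω h i => ?_) hpos.ne' x
  · rw [history_iff_sameHistory hω₀, sameHistory_iff hXs hXl hU]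
    simp +contextual (disch := omega) only [Fin.forall_iff, hpath]
  · rw [hpath ω i t le_rfl]
    exact eq_localTrajectory_of_sameHistory hXl ((history_iff_sameHistory hω₀).1 h) i

/-- conditional independence in coupled subsystems with control
sharing: with global state dynamics X*_{t+1} = f*ₜ(X*ₜ,𝐔ₜ,N⁰ₜ), local dynamics
Xⁱ_{t+1} = fⁱₜ(Xⁱₜ,X*ₜ,𝐔ₜ,Nⁱₜ), mutually independent noise processes independent of
the initial states, actions Uⁱₜ = gⁱₜ(Xⁱₜ, X*_{1:t}, 𝐔_{1:t-1}), and initial local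
states conditionally independent given X*₁, the local states X¹ₜ,…,Xⁿₜ are
conditionally independent given (X*_{1:t}, 𝐔_{1:t-1}) at every time t. -/
theorem coupled_subsystems_conditional_independence
    (Ω : Type) [Fintype Ω] (n : ℕ)
    (𝒳s 𝒩0 : Type) (𝒳 𝒰 𝒩 : Fin n → Type)
    [Fintype 𝒳s] [∀ i, Fintype (𝒳 i)] [∀ i, Fintype (𝒰 i)]
    [Fintype 𝒩0] [∀ i, Fintype (𝒩 i)]
    (p : Ω → ℝ) (hp : ∀ ω, 0 ≤ p ω) (hp1 : ∑ ω, p ω = 1)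
    (Xs : ℕ → Ω → 𝒳s) (Xl : (i : Fin n) → ℕ → Ω → 𝒳 i)
    (U : (i : Fin n) → ℕ → Ω → 𝒰 i)
    (N0 : ℕ → Ω → 𝒩0) (N : (i : Fin n) → ℕ → Ω → 𝒩 i)
    (fs : ℕ → 𝒳s → (∀ i, 𝒰 i) → 𝒩0 → 𝒳s)
    (fl : (i : Fin n) → ℕ → 𝒳 i → 𝒳s → (∀ i, 𝒰 i) → 𝒩 i → 𝒳 i)
    (g : (i : Fin n) → (t : ℕ) → 𝒳 i → (Fin (t + 1) → 𝒳s) →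
      (Fin t → ∀ j, 𝒰 j) → 𝒰 i)
    (hXs : ∀ t ω, Xs (t + 1) ω = fs t (Xs t ω) (fun i => U i t ω) (N0 t ω))
    (hXl : ∀ i t ω, Xl i (t + 1) ω =
      fl i t (Xl i t ω) (Xs t ω) (fun j => U j t ω) (N i t ω))
    (hU : ∀ i t ω, U i t ω = g i t (Xl i t ω) (fun τ : Fin (t + 1) => Xs τ.1 ω)
      (fun τ : Fin t => fun j => U j τ.1 ω))
    (hindep : ∀ (T' : ℕ) (xs : 𝒳s) (x : ∀ i, 𝒳 i)
        (n0 : Fin T' → 𝒩0) (nv : ∀ i, Fin T' → 𝒩 i),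
      prOf p (fun ω => Xs 0 ω = xs ∧ (∀ i, Xl i 0 ω = x i) ∧
          (∀ τ : Fin T', N0 τ.1 ω = n0 τ) ∧ ∀ i, ∀ τ : Fin T', N i τ.1 ω = nv i τ) =
        prOf p (fun ω => Xs 0 ω = xs ∧ ∀ i, Xl i 0 ω = x i) *
          (∏ τ : Fin T', prOf p (fun ω => N0 τ.1 ω = n0 τ)) *
          ∏ i, ∏ τ : Fin T', prOf p (fun ω => N i τ.1 ω = nv i τ))
    (hinit : ∀ xs : 𝒳s, 0 < prOf p (fun ω => Xs 0 ω = xs) →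
      ∀ x : ∀ i, 𝒳 i,
        prOf p (fun ω => (∀ i, Xl i 0 ω = x i) ∧ Xs 0 ω = xs) /
            prOf p (fun ω => Xs 0 ω = xs) =
          ∏ i, prOf p (fun ω => Xl i 0 ω = x i ∧ Xs 0 ω = xs) /
            prOf p (fun ω => Xs 0 ω = xs)) :
    ∀ (t : ℕ) (xsv : Fin (t + 1) → 𝒳s) (uv : Fin t → ∀ j, 𝒰 j),
      0 < prOf p (fun ω => (∀ τ : Fin (t + 1), Xs τ.1 ω = xsv τ) ∧
          ∀ τ : Fin t, ∀ j, U j τ.1 ω = uv τ j) →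
      ∀ x : ∀ i, 𝒳 i,
        prOf p (fun ω => (∀ i, Xl i t ω = x i) ∧
            (∀ τ : Fin (t + 1), Xs τ.1 ω = xsv τ) ∧
            ∀ τ : Fin t, ∀ j, U j τ.1 ω = uv τ j) /
          prOf p (fun ω => (∀ τ : Fin (t + 1), Xs τ.1 ω = xsv τ) ∧
            ∀ τ : Fin t, ∀ j, U j τ.1 ω = uv τ j) =
        ∏ i, prOf p (fun ω => Xl i t ω = x i ∧
            (∀ τ : Fin (t + 1), Xs τ.1 ω = xsv τ) ∧
            ∀ τ : Fin t, ∀ j, U j τ.1 ω = uv τ j) /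
          prOf p (fun ω => (∀ τ : Fin (t + 1), Xs τ.1 ω = xsv τ) ∧
            ∀ τ : Fin t, ∀ j, U j τ.1 ω = uv τ j) :=
  coupled_subsystems_conditional_independence_general Ω n 𝒳s 𝒩0 𝒳 𝒰 𝒩 p hp Xs Xl U N0 N fs fl g hXs
    hXl hU hindep hinit
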